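/- For a ≥ 1, the set Q^{a,u} := { Q equivalent to P : E_P[dQ/dP | F_t] ≤ a · E_P[dQ/dP | F_{t-1}] for all t = 1,...,T } is a consistent set of probability measures: for every t ∈ {0,...,T-1} and every random variable X, inf_{Q∈Q^{a,u}} E_Q[X | F_t] = inf_{Q∈Q^{a,u}} E_Q[ inf_{M∈Q^{a,u}} E_M[X | F_{t+1}] | F_t ]. -/

import Mathlib

/-!
One inequality is the tower property: `E_Q[X | F_t] = E_Q[E_Q[X | F_{t+1}] | F_t]` dominates
`E_Q[inf_M E_M[X | F_{t+1}] | F_t]`. For the other, take `Q` nearly optimal for the right-hand side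
and, on each atom `A` of `F_{t+1}`, a measure `M_A` nearly optimal for `inf_M E_M[X | F_{t+1}]` on
`A`. The measure `R` that follows `Q` up to time `t + 1` and then `M_A` on `A`,
`R(u) = Q(A) M_A(u) / M_A(A)`, satisfies `E_R[X | F_t] = E_Q[E_{M_A}[X | F_{t+1}] | F_t]`, and it
lies in `Q^{a,u}` again: the density constraint at a time `s ≤ t + 1` only involves the masses of
`Q` on `F_s`- and `F_{s-1}`-atoms, and at a time `s > t + 1` those of `M_A` up to the common factor
`Q(A) / M_A(A)`.
-/

open MeasureTheory
open scoped BigOperators ENNReal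

/-- A probability mass function on the finite set `Ω`. -/
def IsProb {Ω : Type*} [Fintype Ω] (Q : Ω → ℝ) : Prop :=
  (∀ ω, 0 ≤ Q ω) ∧ ∑ ω, Q ω = 1

/-- Full support (equivalence with a full-support reference measure). -/
def FullSupport {Ω : Type*} (Q : Ω → ℝ) : Prop := ∀ ω, 0 < Q ω

/-- The atom of the σ-algebra `𝒢` containing `ω`. -/
def atomOf {Ω : Type*} (𝒢 : MeasurableSpace Ω) (ω : Ω) : Set Ω :=
  ⋂₀ {A : Set Ω | MeasurableSet[𝒢] A ∧ ω ∈ A}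

/-- Conditional expectation of `X` under `Q` given the σ-algebra `𝒢`, computed
pointwise on atoms (finite state space). -/
noncomputable def condExpOn {Ω : Type*} [Fintype Ω] (Q : Ω → ℝ)
    (𝒢 : MeasurableSpace Ω) (X : Ω → ℝ) (ω : Ω) : ℝ :=
  (∑ ω', (atomOf 𝒢 ω).indicator (fun u => Q u * X u) ω') /
    (∑ ω', (atomOf 𝒢 ω).indicator Q ω')

/-- `inf_{Q ∈ 𝒬} E_Q[X | 𝒢]`, pointwise in `ω`. -/
noncomputable def infCE {Ω : Type*} [Fintype Ω] (𝒬 : Set (Ω → ℝ))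
    (𝒢 : MeasurableSpace Ω) (X : Ω → ℝ) (ω : Ω) : ℝ :=
  sInf ((fun Q => condExpOn Q 𝒢 X ω) '' 𝒬)

/-- A set of probability measures is consistent w.r.t. the filtration `F`. -/
def IsConsistent {Ω : Type*} [Fintype Ω] (T : ℕ) (F : ℕ → MeasurableSpace Ω)
    (𝒬 : Set (Ω → ℝ)) : Prop :=
  ∀ t, t < T → ∀ X : Ω → ℝ, ∀ ω : Ω,
    infCE 𝒬 (F t) X ω = infCE 𝒬 (F t) (infCE 𝒬 (F (t + 1)) X) ω

/-- A sequence of sets of probability measures is dynamically consistent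
w.r.t. the filtration `F`. -/
def DynConsistent {Ω : Type*} [Fintype Ω] (T : ℕ) (F : ℕ → MeasurableSpace Ω)
    (𝒬 : ℕ → Set (Ω → ℝ)) : Prop :=
  ∀ t, t < T → ∀ A : Set Ω, MeasurableSet[F t] A → A.Nonempty →
    ∀ X : Ω → ℝ, ∀ ω ∈ A,
      (⨅ ω' : A, infCE (𝒬 (t + 1)) (F (t + 1)) X (ω' : Ω)) ≤ infCE (𝒬 t) (F t) X ω ∧
      infCE (𝒬 t) (F t) X ω ≤ ⨆ ω' : A, infCE (𝒬 (t + 1)) (F (t + 1)) X (ω' : Ω)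

/-- The set `P^e` of all full-support probability measures on `Ω`. -/
def fullSupportProbs (Ω : Type*) [Fintype Ω] : Set (Ω → ℝ) :=
  {Q | IsProb Q ∧ FullSupport Q}

/-- The set `Q^{a,u}` of full-support probability measures whose density w.r.t.
the reference measure `P` satisfies
`E_P[dQ/dP | F_s] ≤ a · E_P[dQ/dP | F_{s-1}]` for `s = 1,...,T`. -/
def Qau {Ω : Type*} [Fintype Ω] (T : ℕ) (F : ℕ → MeasurableSpace Ω)
    (P : Ω → ℝ) (a : ℝ) : Set (Ω → ℝ) :=
  {Q | IsProb Q ∧ FullSupport Q ∧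
    ∀ s : ℕ, 1 ≤ s → s ≤ T → ∀ ω : Ω,
      condExpOn P (F s) (fun u => Q u / P u) ω ≤
        a * condExpOn P (F (s - 1)) (fun u => Q u / P u) ω}

section Atoms

variable {Ω : Type*} {𝒢 ℋ : MeasurableSpace Ω}

lemma mem_atomOf (𝒢 : MeasurableSpace Ω) (ω : Ω) : ω ∈ atomOf 𝒢 ω :=
  fun _ hA => hA.2

lemma atomOf_subset_of_measurableSet {ω : Ω} {A : Set Ω} (hA : MeasurableSet[𝒢] A)
    (hω : ω ∈ A) : atomOf 𝒢 ω ⊆ A :=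
  Set.sInter_subset_of_mem ⟨hA, hω⟩

variable [Finite Ω]

lemma measurableSet_atomOf (𝒢 : MeasurableSpace Ω) (ω : Ω) :
    MeasurableSet[𝒢] (atomOf 𝒢 ω) :=
  MeasurableSet.sInter (Set.toFinite _).countable fun _ hA => hA.1

lemma atomOf_eq_of_mem {ω ω' : Ω} (h : ω' ∈ atomOf 𝒢 ω) : atomOf 𝒢 ω' = atomOf 𝒢 ω := by
  have hsub : atomOf 𝒢 ω' ⊆ atomOf 𝒢 ω :=
    atomOf_subset_of_measurableSet (measurableSet_atomOf 𝒢 ω) h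
  refine hsub.antisymm (atomOf_subset_of_measurableSet (measurableSet_atomOf 𝒢 ω') ?_)
  by_contra hω
  have hdiff := (measurableSet_atomOf 𝒢 ω).diff (measurableSet_atomOf 𝒢 ω')
  exact (atomOf_subset_of_measurableSet hdiff ⟨mem_atomOf 𝒢 ω, hω⟩ h).2 (mem_atomOf 𝒢 ω')

lemma atomOf_subset_atomOf_of_le (hle : 𝒢 ≤ ℋ) (ω : Ω) : atomOf ℋ ω ⊆ atomOf 𝒢 ω :=
  atomOf_subset_of_measurableSet (hle _ (measurableSet_atomOf 𝒢 ω)) (mem_atomOf 𝒢 ω)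

noncomputable def atomFinset (𝒢 : MeasurableSpace Ω) (ω : Ω) : Finset Ω :=
  (Set.toFinite (atomOf 𝒢 ω)).toFinset

@[simp]
lemma mem_atomFinset {ω u : Ω} : u ∈ atomFinset 𝒢 ω ↔ u ∈ atomOf 𝒢 ω :=
  Set.Finite.mem_toFinset _

@[simp]
lemma coe_atomFinset (ω : Ω) : (atomFinset 𝒢 ω : Set Ω) = atomOf 𝒢 ω :=
  Set.Finite.coe_toFinset _

lemma measurableSet_atomFinset (𝒢 : MeasurableSpace Ω) (ω : Ω) :
    MeasurableSet[𝒢] (atomFinset 𝒢 ω : Set Ω) := by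
  simpa using measurableSet_atomOf 𝒢 ω

lemma atomFinset_eq_of_mem {ω ω' : Ω} (h : ω' ∈ atomOf 𝒢 ω) :
    atomFinset 𝒢 ω' = atomFinset 𝒢 ω := by
  ext u
  simp only [mem_atomFinset, atomOf_eq_of_mem h]

lemma sum_eq_of_sum_atomFinset_eq {β : Type*} [AddCommMonoid β] {f g : Ω → β} {S : Finset Ω}
    (hS : MeasurableSet[ℋ] (S : Set Ω))
    (h : ∀ u ∈ S, ∑ v ∈ atomFinset ℋ u, f v = ∑ v ∈ atomFinset ℋ u, g v) :
    ∑ u ∈ S, f u = ∑ u ∈ S, g u := by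
  classical
  have hfiber : ∀ u ∈ S, {v ∈ S | atomFinset ℋ v = atomFinset ℋ u} = atomFinset ℋ u := by
    intro u hu
    ext v
    constructor
    · intro hv
      rw [← (Finset.mem_filter.1 hv).2]
      exact mem_atomFinset.2 (mem_atomOf ℋ v)
    · intro hv
      have hv' := mem_atomFinset.1 hv
      exact Finset.mem_filter.2
        ⟨atomOf_subset_of_measurableSet hS hu hv', atomFinset_eq_of_mem hv'⟩
  have hsum : ∀ f : Ω → β,
      ∑ A ∈ S.image (atomFinset ℋ), ∑ v ∈ A, f v = ∑ u ∈ S, f u := fun f =>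
    Finset.sum_image' f fun u hu => by rw [hfiber u hu]
  rw [← hsum f, ← hsum g]
  refine Finset.sum_congr rfl fun A hA => ?_
  obtain ⟨u, hu, rfl⟩ := Finset.mem_image.1 hA
  exact h u hu

end Atoms

section CondExp

variable {Ω : Type*} [Fintype Ω] {𝒢 ℋ : MeasurableSpace Ω} {Q : Ω → ℝ}

lemma condExpOn_eq (Q : Ω → ℝ) (𝒢 : MeasurableSpace Ω) (X : Ω → ℝ) (ω : Ω) :
    condExpOn Q 𝒢 X ω =
      (∑ u ∈ atomFinset 𝒢 ω, Q u * X u) / ∑ u ∈ atomFinset 𝒢 ω, Q u := by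
  simp only [condExpOn, ← coe_atomFinset,
    Finset.sum_indicator_subset _ (Finset.subset_univ _)]

lemma condExpOn_congr_atom (Q X : Ω → ℝ) {ω u : Ω} (hu : u ∈ atomOf 𝒢 ω) :
    condExpOn Q 𝒢 X u = condExpOn Q 𝒢 X ω := by
  simp only [condExpOn, atomOf_eq_of_mem hu]

lemma sum_atomFinset_pos (hQ : FullSupport Q) (𝒢 : MeasurableSpace Ω) (ω : Ω) :
    0 < ∑ u ∈ atomFinset 𝒢 ω, Q u :=
  Finset.sum_pos (fun u _ => hQ u) ⟨ω, mem_atomFinset.2 (mem_atomOf 𝒢 ω)⟩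

lemma condExpOn_mono (hQ : FullSupport Q) {X Y : Ω → ℝ} (h : ∀ u, X u ≤ Y u) (ω : Ω) :
    condExpOn Q 𝒢 X ω ≤ condExpOn Q 𝒢 Y ω := by
  rw [condExpOn_eq, condExpOn_eq]
  gcongr with u
  · exact (sum_atomFinset_pos hQ 𝒢 ω).le
  · exact (hQ u).le
  · exact h u

lemma condExpOn_add_const (hQ : FullSupport Q) (X : Ω → ℝ) (c : ℝ) (ω : Ω) :
    condExpOn Q 𝒢 (fun u => X u + c) ω = condExpOn Q 𝒢 X ω + c := by
  rw [condExpOn_eq, condExpOn_eq, div_add' _ _ _ (sum_atomFinset_pos hQ 𝒢 ω).ne',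
    Finset.mul_sum, ← Finset.sum_add_distrib]
  simp only [mul_add, mul_comm c]

lemma condExpOn_const (hQ : FullSupport Q) (c : ℝ) (ω : Ω) :
    condExpOn Q 𝒢 (fun _ => c) ω = c := by
  rw [condExpOn_eq, ← Finset.sum_mul, mul_div_cancel_left₀ _ (sum_atomFinset_pos hQ 𝒢 ω).ne']

lemma condExpOn_density {P : Ω → ℝ} (hP : FullSupport P) (𝒢 : MeasurableSpace Ω) (ω : Ω) :
    condExpOn P 𝒢 (fun u => Q u / P u) ω =
      (∑ u ∈ atomFinset 𝒢 ω, Q u) / ∑ u ∈ atomFinset 𝒢 ω, P u := by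
  rw [condExpOn_eq]
  congr 1
  exact Finset.sum_congr rfl fun u _ => mul_div_cancel₀ _ (hP u).ne'

lemma condExpOn_density_eq_mul {P R : Ω → ℝ} (hP : FullSupport P) {ω : Ω} {c : ℝ}
    (h : ∑ u ∈ atomFinset 𝒢 ω, R u = c * ∑ u ∈ atomFinset 𝒢 ω, Q u) :
    condExpOn P 𝒢 (fun u => R u / P u) ω = c * condExpOn P 𝒢 (fun u => Q u / P u) ω := by
  rw [condExpOn_density hP, condExpOn_density hP, h, mul_div_assoc]

end CondExp

section Paste

variable {Ω : Type*} [Fintype Ω] {𝒢 ℋ 𝒦 : MeasurableSpace Ω} {Q : Ω → ℝ}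
  {M : Set Ω → Ω → ℝ}

/-- The measure that agrees with `Q` on `ℋ` and has conditional law `M A` on each `ℋ`-atom `A`. -/
noncomputable def paste (ℋ : MeasurableSpace Ω) (Q : Ω → ℝ) (M : Set Ω → Ω → ℝ) (u : Ω) : ℝ :=
  (∑ v ∈ atomFinset ℋ u, Q v) / (∑ v ∈ atomFinset ℋ u, M (atomOf ℋ u) v) * M (atomOf ℋ u) u

lemma paste_eq_of_mem {ω u : Ω} (hu : u ∈ atomOf ℋ ω) :
    paste ℋ Q M u =
      (∑ v ∈ atomFinset ℋ ω, Q v) / (∑ v ∈ atomFinset ℋ ω, M (atomOf ℋ ω) v) *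
        M (atomOf ℋ ω) u := by
  rw [paste, atomFinset_eq_of_mem hu, atomOf_eq_of_mem hu]

lemma paste_pos (hQ : FullSupport Q) (hM : ∀ A, FullSupport (M A)) :
    FullSupport (paste ℋ Q M) := fun u =>
  mul_pos (div_pos (sum_atomFinset_pos hQ ℋ u) (sum_atomFinset_pos (hM _) ℋ u)) (hM _ u)

lemma paste_self (hQ : FullSupport Q) : paste ℋ Q (fun _ => Q) = Q := by
  funext u
  rw [paste, div_self (sum_atomFinset_pos hQ ℋ u).ne', one_mul]

lemma sum_atomFinset_paste_of_le (hle : ℋ ≤ 𝒦) (ω : Ω) :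
    ∑ u ∈ atomFinset 𝒦 ω, paste ℋ Q M u =
      (∑ v ∈ atomFinset ℋ ω, Q v) / (∑ v ∈ atomFinset ℋ ω, M (atomOf ℋ ω) v) *
        ∑ u ∈ atomFinset 𝒦 ω, M (atomOf ℋ ω) u := by
  rw [Finset.mul_sum]
  exact Finset.sum_congr rfl fun u hu =>
    paste_eq_of_mem (atomOf_subset_atomOf_of_le hle ω (mem_atomFinset.1 hu))

lemma sum_paste_of_measurableSet (hM : ∀ A, FullSupport (M A)) {S : Finset Ω}
    (hS : MeasurableSet[ℋ] (S : Set Ω)) : ∑ u ∈ S, paste ℋ Q M u = ∑ u ∈ S, Q u := by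
  refine sum_eq_of_sum_atomFinset_eq hS fun u _ => ?_
  rw [sum_atomFinset_paste_of_le le_rfl,
    div_mul_cancel₀ _ (sum_atomFinset_pos (hM _) ℋ u).ne']

lemma condExpOn_paste (hle : 𝒢 ≤ ℋ) (hM : ∀ A, FullSupport (M A)) (X : Ω → ℝ) (ω : Ω) :
    condExpOn (paste ℋ Q M) 𝒢 X ω =
      condExpOn Q 𝒢 (fun u => condExpOn (M (atomOf ℋ u)) ℋ X u) ω := by
  have hS := hle _ (measurableSet_atomFinset 𝒢 ω)
  rw [condExpOn_eq, condExpOn_eq, sum_paste_of_measurableSet hM hS]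
  congr 1
  refine sum_eq_of_sum_atomFinset_eq hS fun u _ => ?_
  have hpaste : ∀ v ∈ atomFinset ℋ u, paste ℋ Q M v * X v =
      (∑ w ∈ atomFinset ℋ u, Q w) / (∑ w ∈ atomFinset ℋ u, M (atomOf ℋ u) w) *
        (M (atomOf ℋ u) v * X v) := fun v hv => by
    rw [paste_eq_of_mem (mem_atomFinset.1 hv), mul_assoc]
  have hcond : ∀ v ∈ atomFinset ℋ u, Q v * condExpOn (M (atomOf ℋ v)) ℋ X v =
      Q v * condExpOn (M (atomOf ℋ u)) ℋ X u := fun v hv => by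
    have hv' := mem_atomFinset.1 hv
    rw [atomOf_eq_of_mem hv', condExpOn_congr_atom _ X hv']
  rw [Finset.sum_congr rfl hpaste, Finset.sum_congr rfl hcond, ← Finset.mul_sum,
    ← Finset.sum_mul, condExpOn_eq]
  ring

lemma condExpOn_condExpOn_of_le (hQ : FullSupport Q) (hle : 𝒢 ≤ ℋ) (X : Ω → ℝ) (ω : Ω) :
    condExpOn Q 𝒢 (condExpOn Q ℋ X) ω = condExpOn Q 𝒢 X ω := by
  simpa only [paste_self hQ] using (condExpOn_paste (Q := Q) hle (fun _ => hQ) X ω).symm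

end Paste

section InfCE

variable {Ω : Type*} [Fintype Ω] {𝒢 ℋ : MeasurableSpace Ω} {𝒬 : Set (Ω → ℝ)}

lemma bddBelow_condExpOn_image (h𝒬 : ∀ Q ∈ 𝒬, FullSupport Q) (𝒢 : MeasurableSpace Ω)
    (X : Ω → ℝ) (ω : Ω) : BddBelow ((fun Q => condExpOn Q 𝒢 X ω) '' 𝒬) := by
  obtain ⟨b, hb⟩ := (Set.finite_range X).bddBelow
  refine ⟨b, ?_⟩
  rintro _ ⟨Q, hQ, rfl⟩
  calc b = condExpOn Q 𝒢 (fun _ => b) ω := (condExpOn_const (h𝒬 Q hQ) b ω).symm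
    _ ≤ condExpOn Q 𝒢 X ω := condExpOn_mono (h𝒬 Q hQ) (fun u => hb ⟨u, rfl⟩) ω

lemma infCE_le_condExpOn (h𝒬 : ∀ Q ∈ 𝒬, FullSupport Q) {Q : Ω → ℝ} (hQ : Q ∈ 𝒬)
    (X : Ω → ℝ) (ω : Ω) : infCE 𝒬 𝒢 X ω ≤ condExpOn Q 𝒢 X ω :=
  csInf_le (bddBelow_condExpOn_image h𝒬 𝒢 X ω) ⟨Q, hQ, rfl⟩

lemma infCE_congr_atom (X : Ω → ℝ) {ω u : Ω} (hu : u ∈ atomOf 𝒢 ω) :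
    infCE 𝒬 𝒢 X u = infCE 𝒬 𝒢 X ω := by
  simp only [infCE, condExpOn_congr_atom _ X hu]

lemma infCE_infCE_le (h𝒬 : ∀ Q ∈ 𝒬, FullSupport Q) (hne : 𝒬.Nonempty) (hle : 𝒢 ≤ ℋ)
    (X : Ω → ℝ) (ω : Ω) : infCE 𝒬 𝒢 (infCE 𝒬 ℋ X) ω ≤ infCE 𝒬 𝒢 X ω := by
  refine le_csInf (hne.image _) ?_
  rintro _ ⟨Q, hQ, rfl⟩
  calc infCE 𝒬 𝒢 (infCE 𝒬 ℋ X) ω ≤ condExpOn Q 𝒢 (infCE 𝒬 ℋ X) ω :=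
        infCE_le_condExpOn h𝒬 hQ _ ω
    _ ≤ condExpOn Q 𝒢 (condExpOn Q ℋ X) ω :=
        condExpOn_mono (h𝒬 Q hQ) (fun u => infCE_le_condExpOn h𝒬 hQ X u) ω
    _ = condExpOn Q 𝒢 X ω := condExpOn_condExpOn_of_le (h𝒬 Q hQ) hle X ω

/-- The near-minimisers are chosen atom by atom, so that they can be pasted. -/
lemma exists_condExpOn_lt_infCE_add (hne : 𝒬.Nonempty) (X : Ω → ℝ) {ε : ℝ} (hε : 0 < ε) :
    ∃ M : Set Ω → Ω → ℝ, (∀ A, M A ∈ 𝒬) ∧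
      ∀ u, condExpOn (M (atomOf ℋ u)) ℋ X u < infCE 𝒬 ℋ X u + ε := by
  suffices h : ∀ A : Set Ω, ∃ m ∈ 𝒬, ∀ u, atomOf ℋ u = A →
      condExpOn m ℋ X u < infCE 𝒬 ℋ X u + ε by
    choose M hM𝒬 hMlt using h
    exact ⟨M, hM𝒬, fun u => hMlt _ u rfl⟩
  intro A
  by_cases hA : ∃ ω, atomOf ℋ ω = A
  · obtain ⟨ω, rfl⟩ := hA
    obtain ⟨_, ⟨m, hm, rfl⟩, hlt⟩ :=
      exists_lt_of_csInf_lt (hne.image _) (lt_add_of_pos_right (infCE 𝒬 ℋ X ω) hε)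
    refine ⟨m, hm, fun u hu => ?_⟩
    have hu' : u ∈ atomOf ℋ ω := hu ▸ mem_atomOf ℋ u
    rwa [condExpOn_congr_atom m X hu', infCE_congr_atom X hu']
  · obtain ⟨m, hm⟩ := hne
    exact ⟨m, hm, fun u hu => (hA ⟨u, hu⟩).elim⟩

lemma infCE_le_infCE_infCE (h𝒬 : ∀ Q ∈ 𝒬, FullSupport Q)
    (hpaste : ∀ Q ∈ 𝒬, ∀ M : Set Ω → Ω → ℝ, (∀ A, M A ∈ 𝒬) → paste ℋ Q M ∈ 𝒬)
    (hne : 𝒬.Nonempty) (hle : 𝒢 ≤ ℋ) (X : Ω → ℝ) (ω : Ω) :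
    infCE 𝒬 𝒢 X ω ≤ infCE 𝒬 𝒢 (infCE 𝒬 ℋ X) ω := by
  set Y := infCE 𝒬 ℋ X
  refine le_of_forall_pos_le_add fun ε hε => ?_
  obtain ⟨_, ⟨Q, hQ, rfl⟩, hQlt⟩ :=
    exists_lt_of_csInf_lt (hne.image _) (lt_add_of_pos_right (infCE 𝒬 𝒢 Y ω) (half_pos hε))
  obtain ⟨M, hM𝒬, hMlt⟩ := exists_condExpOn_lt_infCE_add (ℋ := ℋ) hne X (half_pos hε)
  have hM : ∀ A, FullSupport (M A) := fun A => h𝒬 _ (hM𝒬 A)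
  calc infCE 𝒬 𝒢 X ω ≤ condExpOn (paste ℋ Q M) 𝒢 X ω :=
        infCE_le_condExpOn h𝒬 (hpaste Q hQ M hM𝒬) X ω
    _ = condExpOn Q 𝒢 (fun u => condExpOn (M (atomOf ℋ u)) ℋ X u) ω :=
        condExpOn_paste hle hM X ω
    _ ≤ condExpOn Q 𝒢 (fun u => Y u + ε / 2) ω :=
        condExpOn_mono (h𝒬 Q hQ) (fun u => (hMlt u).le) ω
    _ = condExpOn Q 𝒢 Y ω + ε / 2 := condExpOn_add_const (h𝒬 Q hQ) Y _ ω
    _ ≤ infCE 𝒬 𝒢 Y ω + ε := by linarith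

theorem infCE_eq_infCE_infCE_of_paste_mem (h𝒬 : ∀ Q ∈ 𝒬, FullSupport Q)
    (hpaste : ∀ Q ∈ 𝒬, ∀ M : Set Ω → Ω → ℝ, (∀ A, M A ∈ 𝒬) → paste ℋ Q M ∈ 𝒬)
    (hle : 𝒢 ≤ ℋ) (X : Ω → ℝ) (ω : Ω) :
    infCE 𝒬 𝒢 X ω = infCE 𝒬 𝒢 (infCE 𝒬 ℋ X) ω := by
  rcases 𝒬.eq_empty_or_nonempty with rfl | hne
  · simp [infCE] -- both sides are the junk value `sInf ∅ = 0`
  exact (infCE_le_infCE_infCE h𝒬 hpaste hne hle X ω).antisymm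
    (infCE_infCE_le h𝒬 hne hle X ω)

end InfCE

lemma paste_mem_Qau {Ω : Type*} [Fintype Ω] {T : ℕ} {F : ℕ → MeasurableSpace Ω}
    (hF : Monotone F) {P : Ω → ℝ} (hP : FullSupport P) {a : ℝ} (k : ℕ) {Q : Ω → ℝ}
    (hQ : Q ∈ Qau T F P a) {M : Set Ω → Ω → ℝ} (hM : ∀ A, M A ∈ Qau T F P a) :
    paste (F k) Q M ∈ Qau T F P a := by
  have hMfs : ∀ A, FullSupport (M A) := fun A => (hM A).2.1
  have hRfs : FullSupport (paste (F k) Q M) := paste_pos hQ.2.1 hMfs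
  have hRsum : ∑ u, paste (F k) Q M u = 1 := by
    rw [sum_paste_of_measurableSet hMfs (by simp only [Finset.coe_univ, MeasurableSet.univ])]
    exact hQ.1.2
  refine ⟨⟨fun u => (hRfs u).le, hRsum⟩, hRfs, fun s hs1 hsT ω => ?_⟩
  obtain ⟨c, hc, Q', hQ', hmass, hmass'⟩ : ∃ c : ℝ, 0 ≤ c ∧ ∃ Q' ∈ Qau T F P a,
      ∑ u ∈ atomFinset (F s) ω, paste (F k) Q M u = c * ∑ u ∈ atomFinset (F s) ω, Q' u ∧
      ∑ u ∈ atomFinset (F (s - 1)) ω, paste (F k) Q M u =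
        c * ∑ u ∈ atomFinset (F (s - 1)) ω, Q' u := by
    by_cases hsk : s ≤ k
    · refine ⟨1, zero_le_one, Q, hQ, ?_, ?_⟩ <;> rw [one_mul] <;>
        exact sum_paste_of_measurableSet hMfs (hF (by omega) _ (measurableSet_atomFinset _ ω))
    · exact ⟨_, (div_pos (sum_atomFinset_pos hQ.2.1 _ ω) (sum_atomFinset_pos (hMfs _) _ ω)).le,
        M (atomOf (F k) ω), hM _, sum_atomFinset_paste_of_le (hF (by omega)) ω,
        sum_atomFinset_paste_of_le (hF (by omega)) ω⟩
  rw [condExpOn_density_eq_mul hP hmass, condExpOn_density_eq_mul hP hmass', mul_left_comm]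
  exact mul_le_mul_of_nonneg_left (hQ'.2.2 s hs1 hsT ω) hc

theorem Qau_consistent_general {Ω : Type*} [Fintype Ω] (T : ℕ)
    (F : ℕ → MeasurableSpace Ω) (hF : Monotone F)
    (P : Ω → ℝ) (hPfs : FullSupport P)
    (a : ℝ) :
    IsConsistent T F (Qau T F P a) := fun t _ X ω =>
  infCE_eq_infCE_infCE_of_paste_mem (fun _ hQ => hQ.2.1)
    (fun _ hQ _ hM => paste_mem_Qau hF hPfs (t + 1) hQ hM) (hF t.le_succ) X ω

/-- For `a ≥ 1`, the set `Q^{a,u}` is a consistent set of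
probability measures. -/
theorem Qau_consistent {Ω : Type*} [Fintype Ω] (T : ℕ)
    (F : ℕ → MeasurableSpace Ω) (hF : Monotone F)
    (P : Ω → ℝ) (hP : IsProb P) (hPfs : FullSupport P)
    (a : ℝ) (ha : 1 ≤ a) :
    IsConsistent T F (Qau T F P a) :=
  Qau_consistent_general T F hF P hPfs a
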